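/- Let n be a positive integer, let ρ > 0 and τ > 0 be real numbers, and let σ₁, …, σₙ ≥ 0 be nonnegative reals with Σ the corresponding diagonal matrix. Then the infimum over all pairs (Γ, W), where Γ is an n×n diagonal matrix with nonnegative entries γ₁, …, γₙ and W is an n×n orthogonal matrix, of (ρ/2)·‖Σ − W Γ² Wᵀ‖_F² + τ·trace(Γ) equals Σᵢ₌₁ⁿ min_{γ ≥ 0} [ (ρ/2)·(σᵢ − γ²)² + τ·γ ], provided σ₁ ≥ σ₂ ≥ … ≥ σₙ. -/

import Mathlib

open Matrix BigOperators Finset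

noncomputable def frobNormSq {m n : ℕ} (M : Matrix (Fin m) (Fin n) ℝ) : ℝ :=
  ∑ i, ∑ j, (M i j)^2

noncomputable def singularValues {m n : ℕ} (M : Matrix (Fin m) (Fin n) ℝ) : Fin n → ℝ :=
  fun i => Real.sqrt ((show (Mᵀ * M).IsHermitian by
    simpa [Matrix.conjTranspose_eq_transpose_of_trivial] using
      Matrix.isHermitian_conjTranspose_mul_self M).eigenvalues i)

noncomputable def nuclearNorm {m n : ℕ} (M : Matrix (Fin m) (Fin n) ℝ) : ℝ :=
  ∑ i, singularValues M i

/-! Put `s_k = ∑ᵢ W_ik² σᵢ`. Since `W` is orthogonal, the objective equals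
`ρ/2 ∑ᵢ σᵢ² + ∑_k (ρ/2 γ_k⁴ − ρ s_k γ_k² + τ γ_k)`, and the `k`-th summand is at least
`h(s_k)`, where `h(s) = min_{γ ≥ 0} (ρ/2 (s − γ²)² + τ γ) − ρ/2 s²` is concave, being an
infimum of functions affine in `s`. The weights `W_ik²` form a doubly stochastic matrix, so
Jensen's inequality in each column gives `∑_k h(s_k) ≥ ∑ᵢ h(σᵢ)`, which is the lower bound.
It is attained at `W = 1` with coordinatewise minimizers `γᵢ`. -/

noncomputable def scalarMin (ρ τ s : ℝ) : ℝ :=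
  sInf ((fun γ : ℝ => ρ / 2 * (s - γ ^ 2) ^ 2 + τ * γ) '' Set.Ici 0)

section ScalarMin

variable {ρ τ : ℝ}

lemma scalarMin_le (hρ : 0 ≤ ρ) (hτ : 0 ≤ τ) (s : ℝ) {γ : ℝ} (hγ : 0 ≤ γ) :
    scalarMin ρ τ s ≤ ρ / 2 * (s - γ ^ 2) ^ 2 + τ * γ := by
  refine csInf_le ⟨0, ?_⟩ ⟨γ, hγ, rfl⟩
  rintro _ ⟨γ', hγ' : 0 ≤ γ', rfl⟩
  positivity

lemma exists_scalarMin_eq (hρ : 0 ≤ ρ) (hτ : 0 < τ) (s : ℝ) :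
    ∃ γ, 0 ≤ γ ∧ scalarMin ρ τ s = ρ / 2 * (s - γ ^ 2) ^ 2 + τ * γ := by
  set f : ℝ → ℝ := fun γ => ρ / 2 * (s - γ ^ 2) ^ 2 + τ * γ
  have hf0 : f 0 = ρ / 2 * s ^ 2 := by simp [f]
  -- `f γ ≥ τ γ`, so beyond `f 0 / τ` the function exceeds `f 0`.
  set B := ρ / 2 * s ^ 2 / τ
  have hB : 0 ≤ B := by positivity
  obtain ⟨γ₀, ⟨hγ₀, -⟩, hmin⟩ := isCompact_Icc.exists_isMinOn
    (Set.nonempty_Icc.2 hB) (by fun_prop : Continuous f).continuousOn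
  have hle : ∀ γ, 0 ≤ γ → f γ₀ ≤ f γ := by
    intro γ hγ
    rcases le_or_gt γ B with hγB | hBγ
    · exact hmin ⟨hγ, hγB⟩
    · have h0 : f γ₀ ≤ f 0 := hmin ⟨le_rfl, hB⟩
      have hτB : τ * B = f 0 := by rw [hf0]; exact mul_div_cancel₀ _ hτ.ne'
      have hτγ : τ * γ ≤ f γ := le_add_of_nonneg_left (by positivity)
      nlinarith [mul_lt_mul_of_pos_left hBγ hτ]
  refine ⟨γ₀, hγ₀, le_antisymm (scalarMin_le hρ hτ.le s hγ₀) ?_⟩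
  refine le_csInf (Set.image_nonempty.2 Set.nonempty_Ici) ?_
  rintro _ ⟨γ, hγ, rfl⟩
  exact hle γ hγ

lemma concaveOn_scalarMin_sub_sq (hρ : 0 ≤ ρ) (hτ : 0 ≤ τ) :
    ConcaveOn ℝ Set.univ (fun s => scalarMin ρ τ s - ρ / 2 * s ^ 2) := by
  refine ⟨convex_univ, fun x _ y _ a b ha hb hab => ?_⟩
  simp only [smul_eq_mul]
  rw [le_sub_iff_add_le]
  refine le_csInf (Set.image_nonempty.2 Set.nonempty_Ici) ?_
  rintro _ ⟨γ, hγ, rfl⟩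
  have hx := mul_le_mul_of_nonneg_left (scalarMin_le hρ hτ x hγ) ha
  have hy := mul_le_mul_of_nonneg_left (scalarMin_le hρ hτ y hγ) hb
  obtain rfl : b = 1 - a := by linarith
  linarith

end ScalarMin

section Frobenius

variable {n : ℕ}

lemma frobNormSq_eq_trace {m : ℕ} (M : Matrix (Fin m) (Fin n) ℝ) :
    frobNormSq M = trace (Mᵀ * M) := by
  simp only [frobNormSq, trace, Matrix.diag, mul_apply, transpose_apply, sq]
  exact Finset.sum_comm

lemma frobNormSq_diagonal (v : Fin n → ℝ) : frobNormSq (diagonal v) = ∑ i, v i ^ 2 := by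
  simp [frobNormSq_eq_trace, sq]

lemma sum_sq_col_of_transpose_mul_self_eq_one {W : Matrix (Fin n) (Fin n) ℝ}
    (hW : Wᵀ * W = 1) (k : Fin n) : ∑ i, W i k ^ 2 = 1 := by
  simpa [mul_apply, sq] using congrFun (congrFun hW k) k

lemma sum_sq_row_of_transpose_mul_self_eq_one {W : Matrix (Fin n) (Fin n) ℝ}
    (hW : Wᵀ * W = 1) (i : Fin n) : ∑ k, W i k ^ 2 = 1 := by
  simpa [mul_apply, sq] using congrFun (congrFun (mul_eq_one_comm.mp hW : W * Wᵀ = 1) i) i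

lemma trace_conj_of_transpose_mul_self_eq_one {W : Matrix (Fin n) (Fin n) ℝ}
    (hW : Wᵀ * W = 1) (M : Matrix (Fin n) (Fin n) ℝ) : trace (W * M * Wᵀ) = trace M := by
  rw [trace_mul_comm, ← Matrix.mul_assoc, hW, Matrix.one_mul]

lemma conj_diagonal_apply_self (W : Matrix (Fin n) (Fin n) ℝ) (d : Fin n → ℝ) (i : Fin n) :
    (W * diagonal d * Wᵀ) i i = ∑ k, W i k ^ 2 * d k := by
  rw [mul_apply]
  simp only [mul_diagonal, transpose_apply]
  exact Finset.sum_congr rfl fun k _ => by ring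

lemma frobNormSq_diagonal_sub_conj {W : Matrix (Fin n) (Fin n) ℝ} (hW : Wᵀ * W = 1)
    (σ d : Fin n → ℝ) :
    frobNormSq (diagonal σ - W * diagonal d * Wᵀ) =
      ∑ i, σ i ^ 2 - 2 * ∑ k, (∑ i, W i k ^ 2 * σ i) * d k + ∑ k, d k ^ 2 := by
  set A := W * diagonal d * Wᵀ
  have hAt : Aᵀ = A := by simp [A, transpose_mul, Matrix.mul_assoc]
  have hAA : A * A = W * diagonal (fun k => d k * d k) * Wᵀ := by
    simp only [A, Matrix.mul_assoc, ← Matrix.mul_assoc Wᵀ W, hW, Matrix.one_mul,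
      ← Matrix.mul_assoc (diagonal d), diagonal_mul_diagonal]
  have hσA : trace (diagonal σ * A) = ∑ k, (∑ i, W i k ^ 2 * σ i) * d k := by
    simp only [trace, Matrix.diag, diagonal_mul, A, conj_diagonal_apply_self, Finset.mul_sum,
      Finset.sum_mul]
    rw [Finset.sum_comm]
    exact Finset.sum_congr rfl fun k _ => Finset.sum_congr rfl fun i _ => by ring
  rw [frobNormSq_eq_trace, transpose_sub, diagonal_transpose, hAt, sub_mul, mul_sub, mul_sub,
    trace_sub, trace_sub, trace_sub, trace_mul_comm A, hσA, hAA,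
    trace_conj_of_transpose_mul_self_eq_one hW, diagonal_mul_diagonal, trace_diagonal,
    trace_diagonal]
  simp only [← sq]
  ring

end Frobenius

lemma sum_scalarMin_le {n : ℕ} {ρ τ : ℝ} (hρ : 0 ≤ ρ) (hτ : 0 ≤ τ) (σ γ : Fin n → ℝ)
    (hγ : ∀ i, 0 ≤ γ i) {W : Matrix (Fin n) (Fin n) ℝ} (hW : Wᵀ * W = 1) :
    ∑ i, scalarMin ρ τ (σ i) ≤
      ρ / 2 * frobNormSq (diagonal σ - W * diagonal (fun i => γ i ^ 2) * Wᵀ) +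
        τ * trace (diagonal γ) := by
  set H : ℝ → ℝ := fun s => scalarMin ρ τ s - ρ / 2 * s ^ 2
  set s : Fin n → ℝ := fun k => ∑ i, W i k ^ 2 * σ i
  have hcol : ∀ k, ∑ i, W i k ^ 2 * H (σ i) ≤
      ρ / 2 * (γ k ^ 2) ^ 2 - ρ * (s k * γ k ^ 2) + τ * γ k := fun k =>
    calc
      ∑ i, W i k ^ 2 * H (σ i) ≤ H (s k) :=
        (concaveOn_scalarMin_sub_sq hρ hτ).le_map_sum (fun i _ => sq_nonneg _)
          (sum_sq_col_of_transpose_mul_self_eq_one hW k) (fun i _ => Set.mem_univ _)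
      _ ≤ _ := by
        have := scalarMin_le hρ hτ (s k) (hγ k)
        simp only [H]
        linarith
  have hrow : ∑ i, H (σ i) = ∑ k, ∑ i, W i k ^ 2 * H (σ i) := by
    rw [Finset.sum_comm]
    simp only [← Finset.sum_mul, sum_sq_row_of_transpose_mul_self_eq_one hW, one_mul]
  rw [frobNormSq_diagonal_sub_conj hW, trace_diagonal]
  calc ∑ i, scalarMin ρ τ (σ i) = ρ / 2 * ∑ i, σ i ^ 2 + ∑ i, H (σ i) := by
        simp only [H, Finset.sum_sub_distrib, Finset.mul_sum]; ring
    _ ≤ ρ / 2 * ∑ i, σ i ^ 2 +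
          ∑ k, (ρ / 2 * (γ k ^ 2) ^ 2 - ρ * (s k * γ k ^ 2) + τ * γ k) := by
        rw [hrow]; gcongr with k; exact hcol k
    _ = _ := by
        simp only [Finset.sum_add_distrib, Finset.sum_sub_distrib, ← Finset.mul_sum]
        ring

theorem stmt_14_general (n : ℕ) (ρ τ : ℝ) (hρ : 0 < ρ) (hτ : 0 < τ)
    (σ : Fin n → ℝ) :
    sInf {v : ℝ | ∃ γ : Fin n → ℝ, ∃ W : Matrix (Fin n) (Fin n) ℝ,
        (∀ i, 0 ≤ γ i) ∧ Wᵀ * W = 1 ∧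
        v = ρ / 2 * frobNormSq (Matrix.diagonal σ -
              W * Matrix.diagonal (fun i => γ i ^ 2) * Wᵀ) +
            τ * Matrix.trace (Matrix.diagonal γ)} =
      ∑ i, sInf ((fun γ : ℝ =>
        ρ / 2 * (σ i - γ ^ 2) ^ 2 + τ * γ) '' Set.Ici 0) := by
  refine IsLeast.csInf_eq ⟨?_, ?_⟩
  · choose γ hγ hγmin using fun i => exists_scalarMin_eq hρ.le hτ (σ i)
    refine ⟨γ, 1, hγ, by simp, ?_⟩
    simp only [transpose_one, Matrix.one_mul, Matrix.mul_one, diagonal_sub,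
      frobNormSq_diagonal, trace_diagonal, Finset.mul_sum, ← Finset.sum_add_distrib]
    exact Finset.sum_congr rfl fun i _ => hγmin i
  · rintro v ⟨γ, W, hγ, hW, rfl⟩
    exact sum_scalarMin_le hρ.le hτ.le σ γ hγ hW

/-- For nonincreasing σᵢ ≥ 0 with Σ = diag(σ), the infimum over pairs
(Γ, W), Γ diagonal nonnegative, W orthogonal, of (ρ/2)·‖Σ − WΓ²Wᵀ‖_F² + τ·trace(Γ)
equals ∑ᵢ min_{γ ≥ 0} [(ρ/2)·(σᵢ − γ²)² + τ·γ]. -/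
theorem stmt_14 (n : ℕ) (hn : 0 < n) (ρ τ : ℝ) (hρ : 0 < ρ) (hτ : 0 < τ)
    (σ : Fin n → ℝ) (hσ0 : ∀ i, 0 ≤ σ i) (hσ : Antitone σ) :
    sInf {v : ℝ | ∃ γ : Fin n → ℝ, ∃ W : Matrix (Fin n) (Fin n) ℝ,
        (∀ i, 0 ≤ γ i) ∧ Wᵀ * W = 1 ∧
        v = ρ / 2 * frobNormSq (Matrix.diagonal σ -
              W * Matrix.diagonal (fun i => γ i ^ 2) * Wᵀ) +
            τ * Matrix.trace (Matrix.diagonal γ)} =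
      ∑ i, sInf ((fun γ : ℝ =>
        ρ / 2 * (σ i - γ ^ 2) ^ 2 + τ * γ) '' Set.Ici 0) :=
  stmt_14_general n ρ τ hρ hτ σ
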